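/- arXiv:2207.14440 — 4 statements merged into one kernel-verified Lean document; each statement's English description precedes it below -/
import Mathlib

section
/- (Single-model A-optimality, Theorem 3 in finite form.) Let J be a symmetric positive definite real p×p matrix, let w_1, …, w_N ∈ ℝᵖ and let c_1, …, c_N be nonnegative reals. For φ = (φ_1, …, φ_N) in the open probability simplex, define T(φ) = trace( J⁻¹ (Σ_{i=1}^N (c_i²/φ_i) w_i w_iᵀ) J⁻¹ ). Then T(φ) ≥ (Σ_{i=1}^N c_i ‖J⁻¹ w_i‖)² for every φ in the open probability simplex; moreover, if c_i ‖J⁻¹ w_i‖ > 0 for every i, then equality holds exactly for the probability vector φ_i = c_i ‖J⁻¹ w_i‖ / Σ_{j=1}^N c_j ‖J⁻¹ w_j‖, so this choice of φ minimizes T. -/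
/-- Euclidean norm on `Fin p → ℝ`: `‖a‖ = (aᵀa)^(1/2)`. -/
noncomputable def euclNorm {p : ℕ} (v : Fin p → ℝ) : ℝ :=
  Real.sqrt (∑ j, v j ^ 2)

lemma euclNorm_nonneg {p : ℕ} (v : Fin p → ℝ) : 0 ≤ euclNorm v :=
  Real.sqrt_nonneg _

lemma trace_aux {p : ℕ} (A : Matrix (Fin p) (Fin p) ℝ) (hA : A.transpose = A) (v : Fin p → ℝ) :
    (A * Matrix.vecMulVec v v * A).trace = euclNorm (A.mulVec v) ^ 2 := by
  have hA' : ∀ i j, A i j = A j i := fun i j => by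
    have := congrFun (congrFun hA i) j
    simpa [Matrix.transpose_apply] using this.symm
  have hM : A * Matrix.vecMulVec v v * A
      = Matrix.vecMulVec (A.mulVec v) (A.mulVec v) := by
    ext i j
    simp only [Matrix.mul_apply, Matrix.vecMulVec_apply, Matrix.mulVec, dotProduct,
      Finset.sum_mul, Finset.mul_sum]
    refine Finset.sum_congr rfl fun k _ => Finset.sum_congr rfl fun m _ => ?_
    rw [hA' k j]
    ring
  rw [hM, euclNorm, Real.sq_sqrt (by positivity)]
  simp [Matrix.trace, Matrix.diag, Matrix.vecMulVec_apply, pow_two]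

/-- Key algebraic identity: the slack in the Cauchy–Schwarz bound. -/
lemma key_identity {N : ℕ} (s φ : Fin N → ℝ) (hφ : ∀ i, 0 < φ i)
    (hsum : (∑ i, φ i) = 1) :
    (∑ i, s i ^ 2 / φ i) - (∑ i, s i) ^ 2
      = ∑ i, φ i * (s i / φ i - ∑ j, s j) ^ 2 := by
  have h : ∀ i : Fin N, φ i * (s i / φ i - ∑ j, s j) ^ 2
      = s i ^ 2 / φ i - 2 * (s i * (∑ j, s j)) + φ i * (∑ j, s j) ^ 2 := by
    intro i
    have := (hφ i).ne'
    field_simp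
    ring
  simp_rw [h]
  rw [Finset.sum_add_distrib, Finset.sum_sub_distrib, ← Finset.mul_sum, ← Finset.sum_mul]
  rw [← Finset.sum_mul, hsum]
  ring

/-- Single-model A-optimality (Theorem 3, finite form). For a symmetric positive
definite `p × p` matrix `J`, vectors `w₁, …, w_N ∈ ℝᵖ` and nonnegative reals
`c₁, …, c_N`, the objective
`T(φ) = tr(J⁻¹ (∑ i, (c i ^ 2 / φ i) • w i w iᵀ) J⁻¹)` satisfies
`T(φ) ≥ (∑ i, c i * ‖J⁻¹ w i‖)²` over the open probability simplex; moreover, if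
`c i * ‖J⁻¹ w i‖ > 0` for all `i`, equality holds exactly for the probability
vector `φ i = c i * ‖J⁻¹ w i‖ / ∑ j, c j * ‖J⁻¹ w j‖`, which hence minimizes `T`. -/
theorem single_model_A_optimality {p N : ℕ}
    (J : Matrix (Fin p) (Fin p) ℝ) (hJ : J.PosDef)
    (w : Fin N → (Fin p → ℝ)) (c : Fin N → ℝ) (hc : ∀ i, 0 ≤ c i) :
    (∀ φ : Fin N → ℝ, (∀ i, 0 < φ i) → (∑ i, φ i) = 1 →
        (J⁻¹ * (∑ i, (c i ^ 2 / φ i) • Matrix.vecMulVec (w i) (w i)) * J⁻¹).trace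
          ≥ (∑ i, c i * euclNorm (J⁻¹.mulVec (w i))) ^ 2) ∧
      ((∀ i, 0 < c i * euclNorm (J⁻¹.mulVec (w i))) →
        ∀ φ : Fin N → ℝ, (∀ i, 0 < φ i) → (∑ i, φ i) = 1 →
          ((J⁻¹ * (∑ i, (c i ^ 2 / φ i) • Matrix.vecMulVec (w i) (w i)) * J⁻¹).trace
              = (∑ i, c i * euclNorm (J⁻¹.mulVec (w i))) ^ 2 ↔
            ∀ i, φ i = c i * euclNorm (J⁻¹.mulVec (w i))
              / (∑ j, c j * euclNorm (J⁻¹.mulVec (w j))))) := by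
  have hJinv : (J⁻¹).transpose = J⁻¹ := by
    have h1 : J.transpose = J := hJ.isHermitian.eq
    rw [Matrix.transpose_nonsing_inv, h1]
  set s : Fin N → ℝ := fun i => c i * euclNorm (J⁻¹.mulVec (w i)) with hs
  -- the trace equals ∑ s i ^ 2 / φ i
  have hT : ∀ φ : Fin N → ℝ,
      (J⁻¹ * (∑ i, (c i ^ 2 / φ i) • Matrix.vecMulVec (w i) (w i)) * J⁻¹).trace
        = ∑ i, s i ^ 2 / φ i := by
    intro φ
    rw [Matrix.mul_sum, Matrix.sum_mul, Matrix.trace_sum]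
    refine Finset.sum_congr rfl fun i _ => ?_
    rw [Matrix.mul_smul, Matrix.smul_mul, Matrix.trace_smul, smul_eq_mul,
      trace_aux _ hJinv, hs]
    ring
  constructor
  · intro φ hφ hsum
    rw [hT φ, ge_iff_le, ← sub_nonneg, key_identity s φ hφ hsum]
    exact Finset.sum_nonneg fun i _ =>
      mul_nonneg (hφ i).le (sq_nonneg _)
  · intro hpos φ hφ hsum
    have hne : (Finset.univ : Finset (Fin N)).Nonempty := by
      by_contra h
      rw [Finset.not_nonempty_iff_eq_empty] at h
      rw [h, Finset.sum_empty] at hsum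
      norm_num at hsum
    have hS : 0 < ∑ j, s j := Finset.sum_pos (fun i _ => hpos i) hne
    rw [hT φ, ← sub_eq_zero, key_identity s φ hφ hsum]
    constructor
    · intro hzero i
      have h0 := (Finset.sum_eq_zero_iff_of_nonneg
        (fun i _ => mul_nonneg (hφ i).le (sq_nonneg _))).mp hzero i (Finset.mem_univ i)
      have h1 : (s i / φ i - ∑ j, s j) ^ 2 = 0 := by
        rcases mul_eq_zero.mp h0 with h | h
        · exact absurd h (hφ i).ne'
        · exact h
      have h2 : s i / φ i = ∑ j, s j := by
        have := pow_eq_zero_iff (n := 2) (by norm_num) |>.mp h1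
        linarith [sub_eq_zero.mp this]
      have h3 : φ i * (s i / φ i) = s i := by
        rw [mul_comm, div_mul_cancel₀ _ (hφ i).ne']
      rw [eq_div_iff hS.ne', ← h2, h3]
    · intro heq
      refine Finset.sum_eq_zero fun i _ => ?_
      have hsi : s i ≠ 0 := (hpos i).ne'
      have : s i / φ i = ∑ j, s j := by
        rw [heq i]
        show s i / (s i / ∑ j, s j) = ∑ j, s j
        rw [div_div_eq_mul_div, mul_comm, mul_div_assoc, div_self hsi, mul_one]
      rw [this, sub_self]
      ring
end

section
/- (Model-robust A-optimal lower bound, Theorem 5.) Let Q ≥ 1 and let α_1, …, α_Q be nonnegative reals with Σ_{q=1}^Q α_q = 1. For each q = 1, …, Q, let J_q be a symmetric positive definite real p_q×p_q matrix, let w_{q1}, …, w_{qN} ∈ ℝ^{p_q} and let c_{q1}, …, c_{qN} be nonnegative reals. Then for any collection of vectors φ_1, …, φ_Q, each in the open probability simplex in ℝᴺ, one has Σ_{q=1}^Q α_q · trace( J_q⁻¹ (Σ_{i=1}^N (c_{qi}²/φ_{qi}) w_{qi} w_{qi}ᵀ) J_q⁻¹ ) ≥ Σ_{q=1}^Q α_q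 (Σ_{i=1}^N c_{qi} ‖J_q⁻¹ w_{qi}‖)². -/
open Matrix in
lemma trace_sandwich_vecMulVec {n : ℕ} (A : Matrix (Fin n) (Fin n) ℝ) (hA : Aᵀ = A)
    (v : Fin n → ℝ) :
    (A * Matrix.vecMulVec v v * A).trace = ∑ j, (A.mulVec v j) ^ 2 := by
  simp only [Matrix.trace, Matrix.diag, Matrix.mul_apply, Matrix.vecMulVec_apply,
    Matrix.mulVec, dotProduct]
  refine Finset.sum_congr rfl fun j _ => ?_
  rw [pow_two, Finset.sum_mul]
  refine Finset.sum_congr rfl fun l _ => ?_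
  rw [Finset.sum_mul, Finset.mul_sum]
  refine Finset.sum_congr rfl fun k _ => ?_
  rw [← congrFun (congrFun hA j) l]
  simp [Matrix.transpose_apply]
  ring

/-- Model-robust A-optimal lower bound (Theorem 5). Given `Q ≥ 1` models with
nonnegative prior probabilities `α q` summing to `1`, symmetric positive
definite `p_q × p_q` matrices `J q`, vectors `w q i ∈ ℝ^{p_q}` and nonnegative
reals `c q i`, for any collection `φ q` of vectors in the open probability
simplex in `ℝᴺ`,
`∑ q, α q * tr(J_q⁻¹ (∑ i, (c_{qi}²/φ_{qi}) • w_{qi} w_{qi}ᵀ) J_q⁻¹)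
  ≥ ∑ q, α q * (∑ i, c_{qi} ‖J_q⁻¹ w_{qi}‖)²`. -/
theorem model_robust_A_optimal_lower_bound {Q N : ℕ} (hQ : 1 ≤ Q)
    (α : Fin Q → ℝ) (hα : ∀ q, 0 ≤ α q) (hαsum : ∑ q, α q = 1)
    (p : Fin Q → ℕ)
    (J : ∀ q, Matrix (Fin (p q)) (Fin (p q)) ℝ) (hJ : ∀ q, (J q).PosDef)
    (w : ∀ q, Fin N → (Fin (p q) → ℝ))
    (c : Fin Q → Fin N → ℝ) (hc : ∀ q i, 0 ≤ c q i)
    (φ : Fin Q → Fin N → ℝ) (hφ : ∀ q i, 0 < φ q i)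
    (hφsum : ∀ q, ∑ i, φ q i = 1) :
    ∑ q, α q *
        ((J q)⁻¹ * (∑ i, (c q i ^ 2 / φ q i) • Matrix.vecMulVec (w q i) (w q i))
          * (J q)⁻¹).trace
      ≥ ∑ q, α q * (∑ i, c q i * euclNorm ((J q)⁻¹.mulVec (w q i))) ^ 2 := by
  rw [ge_iff_le]
  refine Finset.sum_le_sum fun q _ => mul_le_mul_of_nonneg_left ?_ (hα q)
  set A := (J q)⁻¹ with hA
  have hAsym : A.transpose = A := by
    rw [hA, Matrix.transpose_nonsing_inv]
    congr 1
    have := (hJ q).1.eq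
    simpa using this
  -- norms
  set n : Fin N → ℝ := fun i => euclNorm (A.mulVec (w q i)) with hn
  have hn0 : ∀ i, 0 ≤ n i := fun i => Real.sqrt_nonneg _
  have hnsq : ∀ i, n i ^ 2 = ∑ j, (A.mulVec (w q i) j) ^ 2 := fun i =>
    Real.sq_sqrt (Finset.sum_nonneg fun j _ => sq_nonneg _)
  -- trace rewrite
  have htr : (A * (∑ i, (c q i ^ 2 / φ q i) • Matrix.vecMulVec (w q i) (w q i)) * A).trace
      = ∑ i, (c q i ^ 2 / φ q i) * n i ^ 2 := by
    rw [Matrix.mul_sum, Matrix.sum_mul, Matrix.trace_sum]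
    refine Finset.sum_congr rfl fun i _ => ?_
    rw [Matrix.mul_smul, Matrix.smul_mul, Matrix.trace_smul, smul_eq_mul,
      trace_sandwich_vecMulVec A hAsym, hnsq]
  rw [htr]
  -- Cauchy–Schwarz
  have key := Finset.sum_mul_sq_le_sq_mul_sq Finset.univ
    (fun i => Real.sqrt (φ q i)) (fun i => c q i * n i / Real.sqrt (φ q i))
  have h1 : ∀ i : Fin N, Real.sqrt (φ q i) * (c q i * n i / Real.sqrt (φ q i)) = c q i * n i :=
    fun i => by
      rw [mul_div_assoc']
      exact mul_div_cancel_left₀ _ (ne_of_gt (Real.sqrt_pos.2 (hφ q i)))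
  have h2 : ∀ i : Fin N, Real.sqrt (φ q i) ^ 2 = φ q i := fun i =>
    Real.sq_sqrt (hφ q i).le
  have h3 : ∀ i : Fin N, (c q i * n i / Real.sqrt (φ q i)) ^ 2
      = (c q i ^ 2 / φ q i) * n i ^ 2 := fun i => by
    rw [div_pow, h2, mul_pow]; ring
  calc (∑ i, c q i * n i) ^ 2
      = (∑ i, Real.sqrt (φ q i) * (c q i * n i / Real.sqrt (φ q i))) ^ 2 := by
        congr 1; exact (Finset.sum_congr rfl fun i _ => (h1 i).symm)
    _ ≤ (∑ i, Real.sqrt (φ q i) ^ 2) * ∑ i, (c q i * n i / Real.sqrt (φ q i)) ^ 2 := key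
    _ = ∑ i, (c q i ^ 2 / φ q i) * n i ^ 2 := by
        rw [Finset.sum_congr rfl fun i _ => h2 i, hφsum q, one_mul]
        exact Finset.sum_congr rfl fun i _ => h3 i
end

section
/- (Model-robust A-optimal attainment, Theorem 5.) In the setting of the previous statement, assume additionally that a_{qi} := c_{qi} ‖J_q⁻¹ w_{qi}‖ > 0 for all q = 1, …, Q and i = 1, …, N. Then choosing, for each model q, the probability vector φ_{qi} = a_{qi} / Σ_{j=1}^N a_{qj} yields equality: Σ_{q=1}^Q α_q · trace( J_q⁻¹ (Σ_{i=1}^N (c_{qi}²/φ_{qi}) w_{qi} w_{qi}ᵀ) J_q⁻¹ ) = Σ_{q=1}^Q α_q (Σ_{i=1}^N a_{qi})². Hence the weighted sum of traces Σ_q α_q tr(V_q) attains its minimum over all choices of per-model probability vectors at these A-optimal per-model probabilities. -/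
open Matrix Finset
lemma trace_conj_vecMulVec {p : ℕ} (A : Matrix (Fin p) (Fin p) ℝ) (hA : Aᵀ = A)
    (u : Fin p → ℝ) :
    (A * vecMulVec u u * A).trace = ∑ j, (A.mulVec u j) ^ 2 := by
  have h : A * vecMulVec u u * A = vecMulVec (A.mulVec u) (A.mulVec u) := by
    rw [vecMulVec_eq (Fin 1), vecMulVec_eq (Fin 1), replicateCol_mulVec]
    conv_rhs => rw [← vecMul_transpose, hA, replicateRow_vecMul]
    simp [Matrix.mul_assoc]
  rw [h, Matrix.trace]
  simp [Matrix.diag, vecMulVec_apply, sq]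

lemma trace_conj_sum {p N : ℕ} (A : Matrix (Fin p) (Fin p) ℝ) (hA : Aᵀ = A)
    (t : Fin N → ℝ) (w : Fin N → Fin p → ℝ) :
    (A * (∑ i, t i • vecMulVec (w i) (w i)) * A).trace
      = ∑ i, t i * ∑ j, (A.mulVec (w i) j) ^ 2 := by
  rw [Matrix.mul_sum, Matrix.sum_mul, Matrix.trace_sum]
  refine Finset.sum_congr rfl fun i _ => ?_
  rw [Matrix.mul_smul, Matrix.smul_mul, Matrix.trace_smul, trace_conj_vecMulVec A hA,
    smul_eq_mul]


/-- Model-robust A-optimal attainment (Theorem 5). In the model-robust setting,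
assume `a q i := c q i * ‖J_q⁻¹ w_{qi}‖ > 0` for all `q, i`. Then choosing, for
each model `q`, the probability vector `φ q i = a q i / ∑ j, a q j` yields
equality `∑ q, α q * tr(J_q⁻¹ (∑ i, (c_{qi}²/φ_{qi}) • w_{qi} w_{qi}ᵀ) J_q⁻¹)
= ∑ q, α q * (∑ i, a q i)²`; hence the weighted sum of traces attains its
minimum over all choices of per-model probability vectors at these A-optimal
per-model probabilities. -/
theorem model_robust_A_optimal_attainment {Q N : ℕ} (hQ : 1 ≤ Q)
    (α : Fin Q → ℝ) (hα : ∀ q, 0 ≤ α q) (hαsum : ∑ q, α q = 1)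
    (p : Fin Q → ℕ)
    (J : ∀ q, Matrix (Fin (p q)) (Fin (p q)) ℝ) (hJ : ∀ q, (J q).PosDef)
    (w : ∀ q, Fin N → (Fin (p q) → ℝ))
    (c : Fin Q → Fin N → ℝ) (hc : ∀ q i, 0 ≤ c q i)
    (a : Fin Q → Fin N → ℝ)
    (hadef : ∀ q i, a q i = c q i * euclNorm ((J q)⁻¹.mulVec (w q i)))
    (hapos : ∀ q i, 0 < a q i)
    (φ : Fin Q → Fin N → ℝ)
    (hφdef : ∀ q i, φ q i = a q i / ∑ j, a q j) :
    (∑ q, α q *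
          ((J q)⁻¹ * (∑ i, (c q i ^ 2 / φ q i) • Matrix.vecMulVec (w q i) (w q i))
            * (J q)⁻¹).trace
        = ∑ q, α q * (∑ i, a q i) ^ 2) ∧
      ∀ ψ : Fin Q → Fin N → ℝ, (∀ q i, 0 < ψ q i) → (∀ q, ∑ i, ψ q i = 1) →
        ∑ q, α q *
            ((J q)⁻¹ * (∑ i, (c q i ^ 2 / ψ q i) • Matrix.vecMulVec (w q i) (w q i))
              * (J q)⁻¹).trace
          ≥ ∑ q, α q *
              ((J q)⁻¹ * (∑ i, (c q i ^ 2 / φ q i) • Matrix.vecMulVec (w q i) (w q i))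
                * (J q)⁻¹).trace := by
  have hsymm : ∀ q, ((J q)⁻¹)ᵀ = (J q)⁻¹ := fun q => by
    have := ((hJ q).isHermitian.inv)
    simpa [Matrix.IsHermitian, Matrix.conjTranspose_eq_transpose_of_trivial] using this
  have hasq : ∀ q i, a q i ^ 2 = c q i ^ 2 * ∑ j, ((J q)⁻¹.mulVec (w q i) j) ^ 2 := by
    intro q i
    rw [hadef q i, mul_pow, euclNorm, Real.sq_sqrt (by positivity)]
  -- rewrite the trace for any positive weights as a sum of a²/ψ
  have key : ∀ q (ψ : Fin N → ℝ), (∀ i, ψ i ≠ 0) →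
      ((J q)⁻¹ * (∑ i, (c q i ^ 2 / ψ i) • Matrix.vecMulVec (w q i) (w q i))
        * (J q)⁻¹).trace = ∑ i, a q i ^ 2 / ψ i := by
    intro q ψ hψ
    rw [trace_conj_sum _ (hsymm q)]
    refine Finset.sum_congr rfl fun i _ => ?_
    rw [hasq q i, div_mul_eq_mul_div]
  have hφpos : ∀ q i, 0 < φ q i := by
    intro q i
    rw [hφdef]
    exact div_pos (hapos q i) (Finset.sum_pos (fun j _ => hapos q j) ⟨i, Finset.mem_univ i⟩)
  have heq : ∀ q, ∑ i, a q i ^ 2 / φ q i = (∑ i, a q i) ^ 2 := by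
    intro q
    have : ∀ i : Fin N, a q i ^ 2 / φ q i = a q i * ∑ j, a q j := by
      intro i
      have h1 : a q i ≠ 0 := (hapos q i).ne'
      rw [hφdef]
      field_simp
    rw [Finset.sum_congr rfl fun i _ => this i, ← Finset.sum_mul, sq]
  constructor
  · refine Finset.sum_congr rfl fun q _ => ?_
    rw [key q (φ q) (fun i => (hφpos q i).ne'), heq q]
  · intro ψ hψpos hψsum
    refine Finset.sum_le_sum fun q _ => ?_
    rw [key q (φ q) (fun i => (hφpos q i).ne'), key q (ψ q) (fun i => (hψpos q i).ne'),
      heq q]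
    refine mul_le_mul_of_nonneg_left ?_ (hα q)
    have := Finset.sq_sum_div_le_sum_sq_div Finset.univ (a q)
      (fun i _ => hψpos q i)
    rwa [hψsum q, div_one] at this
end

section
/- (Model-robust L-optimality, Theorem 6 in finite form.) Let Q ≥ 1 and let α_1, …, α_Q be nonnegative reals with Σ_{q=1}^Q α_q = 1. For each q = 1, …, Q, let w_{q1}, …, w_{qN} ∈ ℝ^{p_q} and let c_{q1}, …, c_{qN} be nonnegative reals. Then for any collection of vectors φ_1, …, φ_Q, each in the open probability simplex in ℝᴺ, one has Σ_{q=1}^Q α_q · trace( Σ_{i=1}^N (c_{qi}²/φ_{qi}) w_{qi} w_{qi}ᵀ ) ≥ Σ_{q=1}^Q α_q (Σ_{i=1}^N c_{qi} ‖w_{qi}‖)². Moreover, if c_{qi} ‖w_{qi}‖ > 0 for all q and i, then equality holds when φ_{qi} = c_{qi} ‖w_{qi}‖ / Σ_{j=1}^N c_{qj} ‖w_{qj}‖ for each q, so the weighted sum Σ_q α_q tr(V_{q,c}) attains its minimum at these L-optimal per-model probabilities. -/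
lemma euclNorm_sq {p : ℕ} (v : Fin p → ℝ) : euclNorm v ^ 2 = ∑ j, v j ^ 2 := by
  rw [euclNorm, Real.sq_sqrt]
  exact Finset.sum_nonneg fun j _ => sq_nonneg _

lemma trace_eq {p N : ℕ} (w : Fin N → Fin p → ℝ) (a : Fin N → ℝ) :
    (∑ i, (a i) • Matrix.vecMulVec (w i) (w i)).trace
      = ∑ i, a i * euclNorm (w i) ^ 2 := by
  rw [Matrix.trace_sum]
  refine Finset.sum_congr rfl fun i _ => ?_
  rw [Matrix.trace_smul, euclNorm_sq, smul_eq_mul]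
  congr 1
  simp [Matrix.trace, Matrix.diag, Matrix.vecMulVec_apply, sq]

/-- Model-robust L-optimality (Theorem 6, finite form). Given `Q ≥ 1` models
with nonnegative prior probabilities `α q` summing to `1`, vectors
`w q i ∈ ℝ^{p_q}` and nonnegative reals `c q i`: for any collection `φ q` of
vectors in the open probability simplex,
`∑ q, α q * tr(∑ i, (c_{qi}²/φ_{qi}) • w_{qi} w_{qi}ᵀ)
  ≥ ∑ q, α q * (∑ i, c_{qi} ‖w_{qi}‖)²`; moreover, if `c_{qi} ‖w_{qi}‖ > 0` for
all `q, i`, equality holds when `φ q i = c_{qi} ‖w_{qi}‖ / ∑ j, c_{qj} ‖w_{qj}‖`,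
so the weighted sum `∑ q, α q * tr(V_{q,c})` attains its minimum at these
L-optimal per-model probabilities. -/
theorem model_robust_L_optimality {Q N : ℕ} (hQ : 1 ≤ Q)
    (α : Fin Q → ℝ) (hα : ∀ q, 0 ≤ α q) (hαsum : ∑ q, α q = 1)
    (p : Fin Q → ℕ)
    (w : ∀ q, Fin N → (Fin (p q) → ℝ))
    (c : Fin Q → Fin N → ℝ) (hc : ∀ q i, 0 ≤ c q i) :
    (∀ φ : Fin Q → Fin N → ℝ, (∀ q i, 0 < φ q i) → (∀ q, ∑ i, φ q i = 1) →
        ∑ q, α q * (∑ i, (c q i ^ 2 / φ q i) • Matrix.vecMulVec (w q i) (w q i)).trace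
          ≥ ∑ q, α q * (∑ i, c q i * euclNorm (w q i)) ^ 2) ∧
      ((∀ q i, 0 < c q i * euclNorm (w q i)) →
        ∀ φ : Fin Q → Fin N → ℝ,
          (∀ q i, φ q i = c q i * euclNorm (w q i) / ∑ j, c q j * euclNorm (w q j)) →
          ∑ q, α q * (∑ i, (c q i ^ 2 / φ q i) • Matrix.vecMulVec (w q i) (w q i)).trace
            = ∑ q, α q * (∑ i, c q i * euclNorm (w q i)) ^ 2) := by
  constructor
  · intro φ hφ hφsum
    refine Finset.sum_le_sum fun q _ => ?_
    rw [trace_eq]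
    refine mul_le_mul_of_nonneg_left ?_ (hα q)
    -- Cauchy–Schwarz
    have key := Finset.sum_mul_sq_le_sq_mul_sq Finset.univ
      (fun i => c q i * euclNorm (w q i) / Real.sqrt (φ q i))
      (fun i => Real.sqrt (φ q i))
    have h1 : ∀ i : Fin N,
        c q i * euclNorm (w q i) / Real.sqrt (φ q i) * Real.sqrt (φ q i)
          = c q i * euclNorm (w q i) := by
      intro i
      exact div_mul_cancel₀ _ (Real.sqrt_pos.mpr (hφ q i)).ne'
    have h2 : ∀ i : Fin N,
        (c q i * euclNorm (w q i) / Real.sqrt (φ q i)) ^ 2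
          = c q i ^ 2 / φ q i * euclNorm (w q i) ^ 2 := by
      intro i
      rw [div_pow, Real.sq_sqrt (hφ q i).le, mul_pow]
      ring
    have h3 : ∑ i, Real.sqrt (φ q i) ^ 2 = 1 := by
      simp only [Real.sq_sqrt (hφ _ _).le]; exact hφsum q
    calc (∑ i, c q i * euclNorm (w q i)) ^ 2
        = (∑ i, c q i * euclNorm (w q i) / Real.sqrt (φ q i) * Real.sqrt (φ q i)) ^ 2 := by
          simp only [h1]
      _ ≤ (∑ i, (c q i * euclNorm (w q i) / Real.sqrt (φ q i)) ^ 2)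
            * ∑ i, Real.sqrt (φ q i) ^ 2 := key
      _ = ∑ i, c q i ^ 2 / φ q i * euclNorm (w q i) ^ 2 := by
          rw [h3, mul_one]; exact Finset.sum_congr rfl fun i _ => h2 i
  · intro hpos φ hφeq
    refine Finset.sum_congr rfl fun q _ => ?_
    rw [trace_eq]
    congr 1
    rcases isEmpty_or_nonempty (Fin N) with hN | hN
    · simp
    set S := ∑ j, c q j * euclNorm (w q j) with hS
    have hSpos : 0 < S := Finset.sum_pos (fun j _ => hpos q j) Finset.univ_nonempty
    have : ∀ i : Fin N, c q i ^ 2 / φ q i * euclNorm (w q i) ^ 2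
        = c q i * euclNorm (w q i) * S := by
      intro i
      rw [hφeq q i, div_div_eq_mul_div, div_mul_eq_mul_div, div_eq_iff]
      · ring
      · exact (hpos q i).ne'
    rw [Finset.sum_congr rfl fun i _ => this i, ← Finset.sum_mul, ← hS, sq]
end
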